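/- arXiv:2602.22976 — 3 statements merged into one kernel-verified Lean document; each statement's English description precedes it below -/
import Mathlib

section
/- In a weighted hypergraph with maximum hyperedge size d, if M is a maximal matching such that every hyperedge f not in M that intersects no edge of M does not exist (maximality), and additionally every hyperedge f outside M intersects some edge e of M with ω(e) > ω(f) (the local-max property), then the weight of M is at least 1/d times the weight of any matching M' of H, i.e., d·ω(M) ≥ ω(M'). -/
/-!
Charge every edge `f` of the competing matching `M'` to an edge `e` of `M` at least as heavy:
to itself if `f ∈ M`, otherwise to a heavier edge of `M` meeting it given by the local-max
property. The edges charged to `e` are pairwise disjoint and all meet `e` (or are `e`), so there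
are at most `max 1 |e| ≤ d` of them, and each weighs at most `ω e`.
-/

open Finset

namespace Finset

variable {α β : Type*}

theorem card_le_card_of_pairwiseDisjoint_of_inter_nonempty [DecidableEq α]
    {F : Finset (Finset α)} {s : Finset α} (hF : (F : Set (Finset α)).PairwiseDisjoint id)
    (hs : ∀ f ∈ F, (s ∩ f).Nonempty) : #F ≤ #s :=
  calc #F ≤ #(F.biUnion (s ∩ ·)) :=
        card_le_card_biUnion (hF.mono fun _ ↦ inter_subset_right) hs
    _ ≤ #s := card_le_card (biUnion_subset.2 fun _ _ ↦ inter_subset_left)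

theorem card_le_max_one_card_of_pairwiseDisjoint [DecidableEq α]
    {F : Finset (Finset α)} {s : Finset α} (hF : (F : Set (Finset α)).PairwiseDisjoint id)
    (hs : ∀ f ∈ F, f ≠ s → (s ∩ f).Nonempty) : #F ≤ max 1 #s := by
  rcases s.eq_empty_or_nonempty with rfl | hne
  · have hF₁ : F ⊆ {∅} := fun f hf ↦ by
      by_contra hf₀
      simpa using hs f hf (by simpa using hf₀)
    exact (card_le_card hF₁).trans (le_max_left _ _)
  · refine (card_le_card_of_pairwiseDisjoint_of_inter_nonempty hF fun f hf ↦ ?_).trans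
      (le_max_right _ _)
    by_cases hfs : f = s
    · simpa [hfs] using hne
    · exact hs f hf hfs

theorem sum_le_mul_sum_of_maps_to [DecidableEq β] {R : Type*} [CommSemiring R] [PartialOrder R]
    [IsOrderedRing R] {g : α → β} {s : Finset α} {t : Finset β} (hg : ∀ a ∈ s, g a ∈ t)
    {u : α → R} {v : β → R} (hv : ∀ b ∈ t, 0 ≤ v b) (huv : ∀ a ∈ s, u a ≤ v (g a)) (n : ℕ)
    (hn : ∀ b ∈ t, #{a ∈ s | g a = b} ≤ n) : ∑ a ∈ s, u a ≤ n * ∑ b ∈ t, v b := by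
  rw [← sum_fiberwise_of_maps_to hg, mul_sum]
  refine sum_le_sum fun b hb ↦ ?_
  calc ∑ a ∈ s with g a = b, u a ≤ ∑ a ∈ s with g a = b, v b :=
        sum_le_sum fun a ha ↦ (mem_filter.1 ha).2 ▸ huv a (mem_filter.1 ha).1
    _ = #{a ∈ s | g a = b} * v b := by rw [sum_const, nsmul_eq_mul]
    _ ≤ n * v b := mul_le_mul_of_nonneg_right (Nat.mono_cast (hn b hb)) (hv b hb)

end Finset

theorem localmax_approx_guarantee_general {V : Type*} [DecidableEq V]
    (E : Finset (Finset V)) (ω : Finset V → ℝ) (d : ℕ) (hd1 : 1 ≤ d)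
    (hω : ∀ e ∈ E, 0 < ω e) (hsize : ∀ e ∈ E, e.card ≤ d)
    (M : Finset (Finset V)) (hME : M ⊆ E)
    (hlocalmax : ∀ f ∈ E, f ∉ M → ∃ e ∈ M, (e ∩ f).Nonempty ∧ ω f < ω e)
    (M' : Finset (Finset V)) (hM'E : M' ⊆ E)
    (hM'disj : ∀ e₁ ∈ M', ∀ e₂ ∈ M', e₁ ≠ e₂ → Disjoint e₁ e₂) :
    (∑ f ∈ M', ω f) ≤ (d : ℝ) * ∑ e ∈ M, ω e := by
  have hcharge : ∀ f ∈ M', ∃ e ∈ M, (f ≠ e → (e ∩ f).Nonempty) ∧ ω f ≤ ω e := fun f hf ↦ by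
    by_cases hfM : f ∈ M
    · exact ⟨f, hfM, fun h ↦ absurd rfl h, le_rfl⟩
    · obtain ⟨e, he, hmeet, hlt⟩ := hlocalmax f (hM'E hf) hfM
      exact ⟨e, he, fun _ ↦ hmeet, hlt.le⟩
  choose! c hcM hcmeet hcω using hcharge
  refine sum_le_mul_sum_of_maps_to hcM (fun e he ↦ (hω e (hME he)).le) hcω d fun e he ↦ ?_
  have hfiber : (({f ∈ M' | c f = e} : Finset _) : Set (Finset V)).PairwiseDisjoint id :=
    fun f₁ hf₁ f₂ hf₂ ↦ hM'disj f₁ (mem_filter.1 hf₁).1 f₂ (mem_filter.1 hf₂).1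
  calc #{f ∈ M' | c f = e} ≤ max 1 #e :=
        card_le_max_one_card_of_pairwiseDisjoint hfiber fun f hf ↦ by
          obtain ⟨hfM', rfl⟩ := mem_filter.1 hf
          exact hcmeet f hfM'
    _ ≤ d := max_le hd1 (hsize e (hME he))

/-- The 1/d approximation guarantee for maximal matchings with the local-max
property in weighted hypergraphs. -/
theorem localmax_approx_guarantee {V : Type*} [DecidableEq V]
    (E : Finset (Finset V)) (ω : Finset V → ℝ) (d : ℕ) (hd1 : 1 ≤ d)
    (hω : ∀ e ∈ E, 0 < ω e) (hsize : ∀ e ∈ E, e.card ≤ d)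
    (M : Finset (Finset V)) (hME : M ⊆ E)
    (hMdisj : ∀ e₁ ∈ M, ∀ e₂ ∈ M, e₁ ≠ e₂ → Disjoint e₁ e₂)
    (hmaximal : ∀ f ∈ E, f ∉ M → ∃ e ∈ M, (e ∩ f).Nonempty)
    (hlocalmax : ∀ f ∈ E, f ∉ M → ∃ e ∈ M, (e ∩ f).Nonempty ∧ ω f < ω e)
    (M' : Finset (Finset V)) (hM'E : M' ⊆ E)
    (hM'disj : ∀ e₁ ∈ M', ∀ e₂ ∈ M', e₁ ≠ e₂ → Disjoint e₁ e₂) :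
    (∑ f ∈ M', ω f) ≤ (d : ℝ) * ∑ e ∈ M, ω e :=
  localmax_approx_guarantee_general E ω d hd1 hω hsize M hME hlocalmax M' hM'E hM'disj
end

section
/- Let H be a hypergraph in which every hyperedge has size at most d, and suppose M is a matching with the property that every hyperedge f ∉ M either intersects an edge of M of weight strictly greater than ω(f), or belongs to M. Then for any matching M', Σ_{f ∈ M' \ M} ω(f) ≤ d · Σ_{e ∈ M \ M'} ω(e). -/
/-- The key charging inequality: if every edge outside the local-max matching M
intersects a strictly heavier edge of M, then for any matching M',
Σ_{f ∈ M' \ M} ω(f) ≤ d · Σ_{e ∈ M \ M'} ω(e). -/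
theorem charging_inequality {V : Type*} [DecidableEq V]
    (E : Finset (Finset V)) (ω : Finset V → ℝ) (d : ℕ) (hd1 : 1 ≤ d)
    (hω : ∀ e ∈ E, 0 < ω e) (hsize : ∀ e ∈ E, e.card ≤ d)
    (M : Finset (Finset V)) (hME : M ⊆ E)
    (hMdisj : ∀ e₁ ∈ M, ∀ e₂ ∈ M, e₁ ≠ e₂ → Disjoint e₁ e₂)
    (hlm : ∀ f ∈ E, f ∉ M → ∃ e ∈ M, (e ∩ f).Nonempty ∧ ω f < ω e)
    (M' : Finset (Finset V)) (hM'E : M' ⊆ E)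
    (hM'disj : ∀ e₁ ∈ M', ∀ e₂ ∈ M', e₁ ≠ e₂ → Disjoint e₁ e₂) :
    ∑ f ∈ M' \ M, ω f ≤ (d : ℝ) * ∑ e ∈ M \ M', ω e := by
  classical
  set S := M' \ M with hS
  have hchoice : ∀ f ∈ S, ∃ e ∈ M \ M', (e ∩ f).Nonempty ∧ ω f < ω e := by
    intro f hf
    obtain ⟨hf', hfM⟩ := Finset.mem_sdiff.mp hf
    obtain ⟨e, heM, hne, hlt⟩ := hlm f (hM'E hf') hfM
    refine ⟨e, ?_, hne, hlt⟩
    rw [Finset.mem_sdiff]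
    refine ⟨heM, fun heM' => ?_⟩
    have hef : e ≠ f := fun h => hfM (h ▸ heM)
    obtain ⟨v, hv⟩ := hne
    rw [Finset.mem_inter] at hv
    exact (Finset.disjoint_left.mp (hM'disj e heM' f hf' hef) hv.1) hv.2
  set g : Finset V → Finset V := fun f =>
    if h : f ∈ S then (hchoice f h).choose else ∅ with hg
  have hgM : ∀ f ∈ S, g f ∈ M \ M' := by
    intro f hf; simp only [hg, dif_pos hf]; exact (hchoice f hf).choose_spec.1
  have hgne : ∀ f ∈ S, (g f ∩ f).Nonempty := by
    intro f hf; simp only [hg, dif_pos hf]; exact (hchoice f hf).choose_spec.2.1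
  have hglt : ∀ f ∈ S, ω f < ω (g f) := by
    intro f hf; simp only [hg, dif_pos hf]; exact (hchoice f hf).choose_spec.2.2
  have key : ∑ f ∈ S, ω f =
      ∑ e ∈ M \ M', ∑ f ∈ S.filter (fun f => g f = e), ω f :=
    (Finset.sum_fiberwise_of_maps_to hgM ω).symm
  rw [key, Finset.mul_sum]
  refine Finset.sum_le_sum fun e he => ?_
  have heE : e ∈ E := hME (Finset.mem_sdiff.mp he).1
  have hωe : 0 < ω e := hω e heE
  -- fiber cardinality ≤ card e ≤ d
  set F := S.filter (fun f => g f = e) with hF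
  have hvf : ∀ f ∈ F, ∃ v, v ∈ e ∧ v ∈ f := by
    intro f hf
    rw [hF, Finset.mem_filter] at hf
    obtain ⟨v, hv⟩ := hgne f hf.1
    rw [hf.2, Finset.mem_inter] at hv
    exact ⟨v, hv.1, hv.2⟩
  have hfle : ∀ f ∈ F, ω f ≤ ω e := by
    intro f hf
    rw [hF, Finset.mem_filter] at hf
    have := hglt f hf.1
    rw [hf.2] at this
    exact this.le
  have hsum1 : ∑ f ∈ F, ω f ≤ (F.card : ℝ) * ω e := by
    calc ∑ f ∈ F, ω f ≤ ∑ _f ∈ F, ω e := Finset.sum_le_sum hfle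
      _ = (F.card : ℝ) * ω e := by rw [Finset.sum_const, nsmul_eq_mul]
  have hcard : F.card ≤ d := by
    rcases F.eq_empty_or_nonempty with hFe | ⟨f0, hf0⟩
    · simp [hFe]
    · obtain ⟨v0, _, _⟩ := hvf f0 hf0
      set vf : Finset V → V := fun f =>
        if h : f ∈ F then (hvf f h).choose else v0 with hvf'
      have hmap : ∀ f ∈ F, vf f ∈ e := by
        intro f hf; simp only [hvf', dif_pos hf]; exact (hvf f hf).choose_spec.1
      have hmem : ∀ f ∈ F, vf f ∈ f := by
        intro f hf; simp only [hvf', dif_pos hf]; exact (hvf f hf).choose_spec.2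
      have hinj : Set.InjOn vf F := by
        intro f1 h1 f2 h2 heq
        by_contra hne'
        have hf1 : f1 ∈ M' := (Finset.mem_sdiff.mp (Finset.mem_filter.mp h1).1).1
        have hf2 : f2 ∈ M' := (Finset.mem_sdiff.mp (Finset.mem_filter.mp h2).1).1
        have hd := hM'disj f1 hf1 f2 hf2 hne'
        exact Finset.disjoint_left.mp hd (hmem f1 h1) (heq ▸ hmem f2 h2)
      calc F.card ≤ e.card := Finset.card_le_card_of_injOn vf hmap hinj
        _ ≤ d := hsize e heE
  calc ∑ f ∈ F, ω f ≤ (F.card : ℝ) * ω e := hsum1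
    _ ≤ (d : ℝ) * ω e := by
        apply mul_le_mul_of_nonneg_right _ hωe.le
        exact_mod_cast hcard
end

section
/- In the local-max peeling process on a graph with n vertices where vertex weights are resampled i.i.d. uniformly in each round (Luby-type analysis), the expected number of edges removed in one round is at least half the current number of edges; hence the process terminates in O(log n) rounds with high probability. -/
/-
Luby's charging argument. For a dart `(u, v)` let `B(u, v)` be the event that `u` beats every
other vertex of `N(u) ∪ N(v)`. Since the weights are i.i.d. and atomless, every vertex of a finite
set is equally likely to be its strict maximum, so `P(B(u, v)) = 1 / |N(u) ∪ N(v)| ≥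
1 / (deg u + deg v)`. On `B(u, v)` the vertex `u` is selected, so all `deg v` edges at `v` are
removed; two darts into `v` cannot both win, and each removed edge has two endpoints, hence
`∑_{(u,v)} deg v · 1_{B(u,v)} ≤ 2 · #removed`. Taking expectations and pairing `(u, v)` with
`(v, u)`, `∑_{(u,v)} deg v / (deg u + deg v) = |E|`, which gives `E[#removed] ≥ |E| / 2`.
-/

open MeasureTheory ProbabilityTheory Finset

theorem MeasureTheory.Measure.prod_diagonal_eq_zero {α : Type*} [MeasurableSpace α]
    [MeasurableEq α] (μ ν : Measure α) [SFinite ν] [NullSingletonClass ν] :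
    μ.prod ν (Set.diagonal α) = 0 := by
  rw [Measure.prod_apply measurableSet_diagonal]
  simp [Set.diagonal]

namespace SimpleGraph

variable {V : Type*} [Fintype V] (G : SimpleGraph V) [DecidableRel G.Adj]

theorem sum_dart_div_add_eq_card_edgeFinset (w : V → ℝ)
    (hw : ∀ d : G.Dart, w d.fst + w d.snd ≠ 0) :
    ∑ d : G.Dart, w d.snd / (w d.fst + w d.snd) = #G.edgeFinset := by
  have hsymm : ∑ d : G.Dart, w d.snd / (w d.fst + w d.snd)
      = ∑ d : G.Dart, w d.fst / (w d.fst + w d.snd) := by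
    rw [← Equiv.sum_comp (Dart.symm_involutive.toPerm _)]
    simp [add_comm]
  have hsum : ∑ d : G.Dart, (w d.snd / (w d.fst + w d.snd) + w d.fst / (w d.fst + w d.snd))
      = 2 * #G.edgeFinset := by
    rw [sum_congr rfl fun d _ => by rw [← add_div, add_comm, div_self (hw d)], sum_const,
      card_univ, dart_card_eq_twice_card_edges]
    ring
  rw [sum_add_distrib, ← hsymm] at hsum
  linarith

variable [DecidableEq V]

theorem sum_degree_le_two_mul_card {W : Finset V} {R : Finset (Sym2 V)}
    (hWR : ∀ v ∈ W, G.incidenceFinset v ⊆ R) : ∑ v ∈ W, G.degree v ≤ 2 * #R := by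
  calc ∑ v ∈ W, G.degree v = #{d : G.Dart | d.fst ∈ W} := by
        simp_rw [← G.dart_fst_fiber_card_eq_degree]
        exact sum_card_fiberwise_eq_card_filter _ _ _
    _ ≤ #{d : G.Dart | d.edge ∈ R} := by
        refine card_le_card fun d hd => mem_filter.2 ⟨mem_univ _, hWR _ (mem_filter.1 hd).2 ?_⟩
        exact (G.mem_incidenceFinset _ _).2 ⟨d.edge_mem, Sym2.mem_mk_left _ _⟩
    _ = ∑ e ∈ R, #{d : G.Dart | d.edge = e} := (sum_card_fiberwise_eq_card_filter _ _ _).symm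
    _ ≤ ∑ _e ∈ R, 2 := sum_le_sum fun e _ => by
        by_cases he : e ∈ G.edgeSet
        · exact (G.dart_edge_fiber_card e he).le
        · rw [filter_false_of_mem fun d _ (hd : d.edge = e) => he (hd ▸ d.edge_mem)]; simp
    _ = 2 * #R := by rw [sum_const, smul_eq_mul, mul_comm]

end SimpleGraph

namespace Luby

section StrictMax

variable {ι : Type*} [DecidableEq ι]

def strictMaxAt (s : Finset ι) (u : ι) : Set (ι → ℝ) := {x | ∀ v ∈ s.erase u, x v < x u}

lemma measurableSet_strictMaxAt [Countable ι] (s : Finset ι) (u : ι) :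
    MeasurableSet (strictMaxAt s u) :=
  measurableSet_setOfPred.2 (by fun_prop)

lemma disjoint_strictMaxAt {s : Finset ι} {u w : ι} (hu : u ∈ s) (hw : w ∈ s)
    (huw : u ≠ w) :
    Disjoint (strictMaxAt s u) (strictMaxAt s w) :=
  Set.disjoint_left.2 fun _ hxu hxw =>
    (hxu w (mem_erase.2 ⟨huw.symm, hw⟩)).asymm (hxw u (mem_erase.2 ⟨huw, hu⟩))

lemma preimage_comp_strictMaxAt {s : Finset ι} {σ : Equiv.Perm ι}
    (hs : s.map σ.toEmbedding = s) (u : ι) :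
    (· ∘ σ) ⁻¹' strictMaxAt s u = strictMaxAt s (σ u) := by
  ext x
  have : (s.erase u).map σ.toEmbedding = s.erase (σ u) := by rw [map_erase, hs]; rfl
  simp only [strictMaxAt, Set.mem_preimage, Set.mem_ofPred_eq, Function.comp_apply, ← this,
    forall_mem_map, Equiv.coe_toEmbedding]

lemma exists_mem_strictMaxAt {s : Finset ι} (hs : s.Nonempty) {x : ι → ℝ}
    (hx : Function.Injective x) : ∃ u ∈ s, x ∈ strictMaxAt s u := by
  obtain ⟨u, hu, hmax⟩ := s.exists_max_image x hs
  exact ⟨u, hu, fun v hv => (hmax v (mem_of_mem_erase hv)).lt_of_ne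
    (hx.ne (ne_of_mem_erase hv))⟩

end StrictMax

section Exchangeable

variable {ι Ω : Type*} [MeasurableSpace Ω] {P : Measure Ω} {μ : Measure ℝ}
  {X : ι → Ω → ℝ}

lemma measure_eq_eq_zero [SFinite μ] [NullSingletonClass μ] (hX : ∀ i, Measurable (X i))
    (hind : iIndepFun X P) (hlaw : ∀ i, P.map (X i) = μ) {i j : ι} (hij : i ≠ j) :
    P {ω | X i ω = X j ω} = 0 := by
  have := hind.isProbabilityMeasure
  have hpair : P.map (fun ω => (X i ω, X j ω)) = μ.prod μ := by
    rw [(indepFun_iff_map_prod_eq_prod_map_map (hX i).aemeasurable (hX j).aemeasurable).1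
      (hind.indepFun hij), hlaw, hlaw]
  rw [← Measure.prod_diagonal_eq_zero μ μ, ← hpair,
    Measure.map_apply (by fun_prop) measurableSet_diagonal]
  rfl

lemma ae_injective [Countable ι] (hX : ∀ i, Measurable (X i)) (hind : iIndepFun X P)
    (hlaw : ∀ i, P.map (X i) = μ) [SFinite μ] [NullSingletonClass μ] :
    ∀ᵐ ω ∂P, Function.Injective fun i => X i ω := by
  simp only [Function.Injective, ae_all_iff]
  intro i j
  by_cases hij : i = j
  · exact ae_of_all _ fun _ _ => hij
  · exact measure_eq_zero_iff_ae_notMem.1 (measure_eq_eq_zero hX hind hlaw hij) |>.mono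
      fun _ hω heq => absurd heq hω

variable [Fintype ι]

lemma map_comp_perm_eq (hX : ∀ i, Measurable (X i)) (hind : iIndepFun X P)
    (hlaw : ∀ i, P.map (X i) = μ) (σ : Equiv.Perm ι) :
    P.map (fun ω i => X (σ i) ω) = P.map (fun ω i => X i ω) := by
  rw [(hind.precomp σ.injective).map_fun_eq_pi_map fun i => (hX _).aemeasurable,
    hind.map_fun_eq_pi_map fun i => (hX i).aemeasurable]
  simp only [hlaw]

variable [DecidableEq ι]

lemma measure_strictMaxAt_eq (hX : ∀ i, Measurable (X i)) (hind : iIndepFun X P)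
    (hlaw : ∀ i, P.map (X i) = μ) {s : Finset ι} {u w : ι} (hu : u ∈ s) (hw : w ∈ s) :
    P {ω | (fun i => X i ω) ∈ strictMaxAt s u} =
      P {ω | (fun i => X i ω) ∈ strictMaxAt s w} := by
  have hJ : Measurable fun ω i => X i ω := measurable_pi_lambda _ hX
  have hswap : s.map (Equiv.swap u w).toEmbedding = s := by
    refine map_perm fun v hv => ?_
    rcases Equiv.swap_apply_ne_self_iff.1 hv with ⟨-, rfl | rfl⟩ <;> assumption
  have hset : {ω | (fun i => X i ω) ∈ strictMaxAt s w}
      = (fun ω i => X (Equiv.swap u w i) ω) ⁻¹' strictMaxAt s u := by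
    have h := preimage_comp_strictMaxAt hswap u
    rw [Equiv.swap_apply_left] at h
    rw [← h]; rfl
  rw [hset, ← Measure.map_apply (by fun_prop) (measurableSet_strictMaxAt s u),
    map_comp_perm_eq hX hind hlaw, Measure.map_apply hJ (measurableSet_strictMaxAt s u)]
  rfl

lemma measure_strictMaxAt [SFinite μ] [NullSingletonClass μ]
    (hX : ∀ i, Measurable (X i)) (hind : iIndepFun X P) (hlaw : ∀ i, P.map (X i) = μ)
    {s : Finset ι} {u : ι} (hu : u ∈ s) :
    P {ω | (fun i => X i ω) ∈ strictMaxAt s u} = (#s : ENNReal)⁻¹ := by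
  have := hind.isProbabilityMeasure
  set E : ι → Set Ω := fun w => {ω | (fun i => X i ω) ∈ strictMaxAt s w}
  have hE : ∀ w, MeasurableSet (E w) := fun w =>
    measurable_pi_lambda _ hX (measurableSet_strictMaxAt s w)
  have hcover : P (⋃ w ∈ s, E w) = 1 := by
    rw [← prob_compl_eq_zero_iff (s.measurableSet_biUnion fun w _ => hE w),
      measure_eq_zero_iff_ae_notMem]
    filter_upwards [ae_injective hX hind hlaw] with ω hω
    simpa [E] using exists_mem_strictMaxAt ⟨u, hu⟩ hω
  have hdisj : (s : Set ι).PairwiseDisjoint E := fun v hv w hw hvw =>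
    (disjoint_strictMaxAt hv hw hvw).preimage _
  rw [measure_biUnion_finset hdisj fun w _ => hE w,
    sum_congr rfl fun w hw => measure_strictMaxAt_eq hX hind hlaw hw hu, sum_const,
    nsmul_eq_mul] at hcover
  exact ENNReal.eq_inv_of_mul_eq_one_left (by rwa [mul_comm])

end Exchangeable

section Graph

variable {V : Type*} [Fintype V] [DecidableEq V] (G : SimpleGraph V) [DecidableRel G.Adj]

open scoped Classical in
noncomputable def removedEdges (x : V → ℝ) : Finset (Sym2 V) :=
  G.edgeFinset.filter fun e => ∃ v, v ∈ e ∧ ((∀ u ∈ G.neighborFinset v, x u < x v) ∨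
    ∃ u, G.Adj v u ∧ ∀ w ∈ G.neighborFinset u, x w < x u)

def dartNeighborFinset (d : G.Dart) : Finset V :=
  G.neighborFinset d.fst ∪ G.neighborFinset d.snd

variable {G}

lemma fst_mem_dartNeighborFinset (d : G.Dart) : d.fst ∈ dartNeighborFinset G d :=
  mem_union_right _ ((G.mem_neighborFinset _ _).2 d.adj.symm)

lemma card_dartNeighborFinset_le (d : G.Dart) :
    #(dartNeighborFinset G d) ≤ G.degree d.fst + G.degree d.snd :=
  (card_union_le _ _).trans_eq <| by
    rw [G.card_neighborFinset_eq_degree, G.card_neighborFinset_eq_degree]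

lemma incidenceFinset_subset_removedEdges {x : V → ℝ} {d : G.Dart}
    (hd : x ∈ strictMaxAt (dartNeighborFinset G d) d.fst) :
    G.incidenceFinset d.snd ⊆ removedEdges G x := by
  intro e he
  obtain ⟨heE, hsnd⟩ := (G.mem_incidenceFinset _ _).1 he
  refine mem_filter.2 ⟨G.mem_edgeFinset.2 heE, d.snd, hsnd,
    Or.inr ⟨d.fst, d.adj.symm, fun w hw => hd w (mem_erase.2 ⟨?_, mem_union_left _ hw⟩)⟩⟩
  exact (G.ne_of_adj ((G.mem_neighborFinset _ _).1 hw)).symm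

lemma injOn_snd_strictMaxAt (x : V → ℝ) :
    Set.InjOn (fun d : G.Dart => d.snd) {d | x ∈ strictMaxAt (dartNeighborFinset G d) d.fst} := by
  intro d hd d' hd' hsnd
  by_contra hne
  have hfst : d.fst ≠ d'.fst := fun h => hne (SimpleGraph.Dart.ext _ _ (Prod.ext h hsnd))
  have hmem (d₁ d₂ : G.Dart) (h : d₁.snd = d₂.snd) :
      d₂.fst ∈ dartNeighborFinset G d₁ :=
    mem_union_right _ ((G.mem_neighborFinset _ _).2 (h ▸ d₂.adj.symm))
  exact (hd d'.fst (mem_erase.2 ⟨hfst.symm, hmem d d' hsnd⟩)).asymm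
    (hd' d.fst (mem_erase.2 ⟨hfst, hmem d' d hsnd.symm⟩))

open scoped Classical in
lemma sum_degree_snd_le_two_mul_card_removedEdges (x : V → ℝ) :
    ∑ d : G.Dart with x ∈ strictMaxAt (dartNeighborFinset G d) d.fst, G.degree d.snd
      ≤ 2 * #(removedEdges G x) := by
  set D : Finset G.Dart := {d | x ∈ strictMaxAt (dartNeighborFinset G d) d.fst}
  calc ∑ d ∈ D, G.degree d.snd = ∑ v ∈ D.image (·.snd), G.degree v :=
        (sum_image (f := fun v => G.degree v) fun d hd d' hd' =>
          injOn_snd_strictMaxAt x (by simpa [D] using hd) (by simpa [D] using hd')).symm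
    _ ≤ 2 * #(removedEdges G x) := G.sum_degree_le_two_mul_card fun v hv => by
        obtain ⟨d, hd, rfl⟩ := mem_image.1 hv
        exact incidenceFinset_subset_removedEdges (mem_filter.1 hd).2

lemma measurable_card_removedEdges :
    Measurable fun x : V → ℝ => (#(removedEdges G x) : ℝ) := by
  simp only [removedEdges, natCast_card_filter]
  exact Finset.measurable_sum _ fun e _ =>
    Measurable.ite (measurableSet_setOfPred.2 (by fun_prop)) measurable_const measurable_const

lemma inv_degree_add_degree_le_measureReal {Ω : Type*} [MeasurableSpace Ω] {P : Measure Ω}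
    {μ : Measure ℝ} [SFinite μ] [NullSingletonClass μ] {X : V → Ω → ℝ}
    (hX : ∀ v, Measurable (X v)) (hind : iIndepFun X P) (hlaw : ∀ v, P.map (X v) = μ)
    (d : G.Dart) :
    ((G.degree d.fst + G.degree d.snd : ℝ))⁻¹
      ≤ P.real {ω | (fun v => X v ω) ∈ strictMaxAt (dartNeighborFinset G d) d.fst} := by
  rw [measureReal_def, measure_strictMaxAt hX hind hlaw (fst_mem_dartNeighborFinset d),
    ENNReal.toReal_inv, ENNReal.toReal_natCast]
  gcongr
  · exact_mod_cast card_pos.2 ⟨_, fst_mem_dartNeighborFinset d⟩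
  · exact_mod_cast card_dartNeighborFinset_le d

end Graph
end Luby

open Luby

open scoped Classical in
/-- Luby-type lemma: with fresh i.i.d. uniform vertex weights, in one round of
local-max selection (selected vertices and their neighbors are removed, with
all incident edges), the expected number of removed edges is at least half the
current number of edges. -/
theorem luby_expected_removed_edges {V : Type*} [Fintype V] [DecidableEq V]
    (G : SimpleGraph V) [DecidableRel G.Adj]
    {Ω : Type*} [MeasureSpace Ω] [IsProbabilityMeasure (ℙ : Measure Ω)]
    (X : V → Ω → ℝ) (hmeas : ∀ v, Measurable (X v))
    (hindep : iIndepFun X ℙ)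
    (hunif : ∀ v, Measure.map (X v) ℙ = volume.restrict (Set.Ioo (0:ℝ) 1)) :
    (G.edgeFinset.card : ℝ) / 2 ≤
      ∫ ω, ((G.edgeFinset.filter (fun e =>
        ∃ v, v ∈ e ∧ ((∀ u ∈ G.neighborFinset v, X u ω < X v ω) ∨
          ∃ u, G.Adj v u ∧
            ∀ w ∈ G.neighborFinset u, X w ω < X u ω))).card : ℝ) ∂ℙ := by
  set J : Ω → V → ℝ := fun ω v => X v ω
  have hJ : Measurable J := measurable_pi_lambda _ hmeas
  set B : G.Dart → Set Ω := fun d => J ⁻¹' strictMaxAt (dartNeighborFinset G d) d.fst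
  have hB : ∀ d, MeasurableSet (B d) := fun d => hJ (measurableSet_strictMaxAt _ _)
  have hdeg : ∀ d : G.Dart, (G.degree d.fst : ℝ) + G.degree d.snd ≠ 0 := fun d =>
    (add_pos_of_pos_of_nonneg (mod_cast G.degree_pos_iff_exists_adj _ |>.2 ⟨_, d.adj⟩)
      (Nat.cast_nonneg _)).ne'
  have hcharge : ∀ ω, ∑ d, (B d).indicator (fun _ => (G.degree d.snd : ℝ)) ω
      ≤ 2 * #(removedEdges G (J ω)) := fun ω => by
    simp only [Set.indicator_apply, ← sum_filter]
    exact_mod_cast sum_degree_snd_le_two_mul_card_removedEdges (J ω)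
  have hR : Integrable (fun ω => (#(removedEdges G (J ω)) : ℝ)) ℙ :=
    .of_bound (measurable_card_removedEdges.comp hJ).aestronglyMeasurable #G.edgeFinset
      (ae_of_all _ fun ω => by rw [Real.norm_natCast]; exact_mod_cast card_filter_le _ _)
  show _ ≤ ∫ ω, (#(removedEdges G (J ω)) : ℝ)
  calc (#G.edgeFinset : ℝ) / 2
      = (∑ d : G.Dart, (G.degree d.snd : ℝ) / (G.degree d.fst + G.degree d.snd)) / 2 := by
        rw [G.sum_dart_div_add_eq_card_edgeFinset (fun v => (G.degree v : ℝ)) hdeg]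
    _ ≤ (∑ d : G.Dart, (ℙ : Measure Ω).real (B d) * G.degree d.snd) / 2 := by
        gcongr with d
        rw [div_eq_inv_mul]
        gcongr
        exact inv_degree_add_degree_le_measureReal hmeas hindep hunif d
    _ = (∫ ω, ∑ d, (B d).indicator (fun _ => (G.degree d.snd : ℝ)) ω) / 2 := by
        rw [integral_finsetSum _ fun d _ => (integrable_const _).indicator (hB d)]
        simp only [integral_indicator_const _ (hB _), smul_eq_mul]
    _ ≤ ∫ ω, (#(removedEdges G (J ω)) : ℝ) := by
        rw [div_le_iff₀ two_pos, ← integral_mul_const]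
        exact integral_mono
          (integrable_finsetSum _ fun d _ => (integrable_const _).indicator (hB d))
          (hR.mul_const 2) fun ω => by linarith [hcharge ω]
end
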